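/- arXiv:1511.08163 — 4 statements merged into one kernel-verified Lean document; each statement's English description precedes it below -/
import Mathlib

section
/- Let n ≥ 4 be an integer, let K_{6n} be given a red/blue edge-coloring that is (F_n, K_4)-free, and suppose there is a set K of 2n vertices all of whose internal edges are red. Then the coloring restricted to the 4n vertices outside K contains no blue cycle of length 5. -/
open SimpleGraph

/-- The fan graph `Fₙ`: the join of a single vertex (the center, `none`) with `n`
pairwise disjoint edges (`some (i, a)` is matched with `some (i, !a)`). -/
def Fan (n : ℕ) : SimpleGraph (Option (Fin n × Bool)) where
  Adj u v := u ≠ v ∧ (u = none ∨ v = none ∨ ∃ i a b, u = some (i, a) ∧ v = some (i, b))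
  symm := by
    constructor
    rintro u v ⟨h1, h2⟩
    exact ⟨h1.symm, by tauto⟩
  loopless := by constructor; rintro u ⟨h1, -⟩; exact h1 rfl

/-- `G` contains a subgraph isomorphic to the fan graph `Fₙ`. -/
def ContainsFan {V : Type*} (G : SimpleGraph V) (n : ℕ) : Prop :=
  ∃ f : Option (Fin n × Bool) ↪ V, ∀ u v, (Fan n).Adj u v → G.Adj (f u) (f v)

/-- `G` contains a subgraph isomorphic to `K₄`. -/
def ContainsK4 {V : Type*} (G : SimpleGraph V) : Prop :=
  ∃ a b c d : V, G.Adj a b ∧ G.Adj a c ∧ G.Adj a d ∧ G.Adj b c ∧ G.Adj b d ∧ G.Adj c d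

/-!
Outside `K`, every vertex has at most one red neighbour in `K` (two would give a red `Fₙ`
centred in `K`), so a blue triangle outside `K` extends by a vertex of `K` to a blue `K₄`.
Hence the blue graph on the `4n` vertices outside `K` is triangle-free. Red neighbourhoods
outside `K` therefore have no blue triangle, and a greedy red matching in one of size `2n + 1`
would give a red `Fₙ`; so every vertex outside `K` has blue degree at least `2n - 1 > 2/5 · 4n`
there. Finally, in a triangle-free graph no vertex is adjacent to three vertices of a closed
walk of length five (two of them would be consecutive), so double counting the edges between
such a walk and the graph gives `5 (2n - 1) ≤ 2 · 4n`, which fails for `n ≥ 3`.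
-/

open Finset

lemma Fin.exists_mem_add_one_mem_of_two_lt_card {s : Finset (Fin 5)} (hs : 2 < #s) :
    ∃ a ∈ s, a + 1 ∈ s := by
  revert s; decide

namespace SimpleGraph

variable {V : Type*} {G : SimpleGraph V}

def IsIndexedMatching (G : SimpleGraph V) {k : ℕ} (q : Fin k × Bool → V) : Prop :=
  Function.Injective q ∧ ∀ i, G.Adj (q (i, false)) (q (i, true))

def matchingCons {k : ℕ} (a b : V) (q : Fin k × Bool → V) : Fin (k + 1) × Bool → V :=
  fun x => Fin.cons (α := fun _ => V) (cond x.2 b a) (fun j => q (j, x.2)) x.1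

@[simp]
lemma matchingCons_zero {k : ℕ} (a b : V) (q : Fin k × Bool → V) (c : Bool) :
    matchingCons a b q (0, c) = cond c b a := rfl

@[simp]
lemma matchingCons_succ {k : ℕ} (a b : V) (q : Fin k × Bool → V) (j : Fin k) (c : Bool) :
    matchingCons a b q (j.succ, c) = q (j, c) := rfl

lemma forall_matchingCons {k : ℕ} {p : V → Prop} {a b : V} {q : Fin k × Bool → V}
    (ha : p a) (hb : p b) (hq : ∀ x, p (q x)) : ∀ x, p (matchingCons a b q x) := by
  rintro ⟨i, c⟩
  cases i using Fin.cases <;> cases c <;> simp [ha, hb, hq]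

lemma IsIndexedMatching.cons {k : ℕ} {q : Fin k × Bool → V} (hq : G.IsIndexedMatching q)
    {a b : V} (hab : G.Adj a b) (ha : ∀ x, q x ≠ a) (hb : ∀ x, q x ≠ b) :
    G.IsIndexedMatching (matchingCons a b q) := by
  refine ⟨?_, fun i => ?_⟩
  · rintro ⟨i, c⟩ ⟨i', c'⟩ h
    cases i using Fin.cases <;> cases i' using Fin.cases <;> cases c <;> cases c' <;>
      simp_all [hab.ne, hab.ne', hq.1.eq_iff]
  · cases i using Fin.cases <;> simp [hab, hq.2]

lemma containsFan_of_isIndexedMatching {k : ℕ} {q : Fin k × Bool → V}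
    (hq : G.IsIndexedMatching q) {w : V} (hw : ∀ x, G.Adj w (q x)) : ContainsFan G k := by
  refine ⟨⟨fun o => o.elim w q, ?_⟩, ?_⟩
  · rintro (_ | x) (_ | y) h
    exacts [rfl, absurd h (hw y).ne, absurd h.symm (hw x).ne, congrArg some (hq.1 h)]
  · rintro (_ | ⟨i, a⟩) (_ | ⟨j, b⟩) ⟨hne, hor⟩
    · exact absurd rfl hne
    · exact hw (j, b)
    · exact (hw (i, a)).symm
    · obtain ⟨k, a', b', h1, h2⟩ := (hor.resolve_left (by simp)).resolve_left (by simp)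
      simp only [Option.some.injEq, Prod.mk.injEq] at h1 h2 hne
      obtain ⟨rfl, rfl⟩ := h1
      obtain ⟨rfl, rfl⟩ := h2
      cases a <;> cases b
      exacts [absurd rfl hne, hq.2 _, (hq.2 _).symm, absurd rfl hne]

lemma exists_adj_of_cliqueFreeOn_compl {S : Finset V} {r : ℕ} (hS : Gᶜ.CliqueFreeOn S r)
    (hr : r ≤ #S) : ∃ a ∈ S, ∃ b ∈ S, G.Adj a b := by
  obtain ⟨T, hTS, hT⟩ := exists_subset_card_eq hr
  have hT' : ¬ Gᶜ.IsClique (T : Set V) := fun h => hS (coe_subset.2 hTS) ⟨h, hT⟩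
  obtain ⟨a, ha, b, hb, hab, h⟩ : ∃ a ∈ T, ∃ b ∈ T, a ≠ b ∧ ¬ Gᶜ.Adj a b := by
    simpa [IsClique, Set.Pairwise] using hT'
  exact ⟨a, hTS ha, b, hTS hb, by simpa [hab] using h⟩

/-- `Gᶜ.CliqueFreeOn S (m + 2)` says that `S` has no independent set of size `m + 2`, so as long
as `m + 2` vertices remain, an edge can be picked greedily. -/
lemma exists_isIndexedMatching_of_cliqueFreeOn_compl [DecidableEq V] {m : ℕ} :
    ∀ (k : ℕ) {S : Finset V}, Gᶜ.CliqueFreeOn S (m + 2) → 2 * k + m ≤ #S →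
      ∃ q : Fin k × Bool → V, G.IsIndexedMatching q ∧ ∀ x, q x ∈ S
  | 0, _, _, _ =>
    ⟨fun x => x.1.elim0, ⟨fun x => x.1.elim0, fun i => i.elim0⟩, fun x => x.1.elim0⟩
  | k + 1, S, hS, hcard => by
    obtain ⟨a, ha, b, hb, hab⟩ := exists_adj_of_cliqueFreeOn_compl hS (by omega)
    have hb' : b ∈ S.erase a := mem_erase.2 ⟨hab.ne', hb⟩
    have hS' : (S.erase a).erase b ⊆ S := (erase_subset _ _).trans (erase_subset _ _)
    have hcard' : #((S.erase a).erase b) = #S - 2 := by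
      rw [card_erase_of_mem hb', card_erase_of_mem ha]; omega
    obtain ⟨q, hq, hqS⟩ := exists_isIndexedMatching_of_cliqueFreeOn_compl k
      (CliqueFreeOn.subset _ (coe_subset.2 hS') hS) (by omega)
    refine ⟨matchingCons a b q, hq.cons hab (fun x h => ?_) (fun x h => ?_),
      forall_matchingCons ha hb (fun x => hS' (hqS x))⟩
    · simpa [h] using hqS x
    · simpa [h] using hqS x

lemma card_le_of_not_containsFan [DecidableEq V] {n : ℕ} (hfan : ¬ ContainsFan G n)
    {S : Finset V} (hS : Gᶜ.CliqueFreeOn S 3) {v : V} (hv : ∀ y ∈ S, G.Adj v y) :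
    #S ≤ 2 * n := by
  by_contra! h
  obtain ⟨q, hq, hqS⟩ := exists_isIndexedMatching_of_cliqueFreeOn_compl (m := 1) n hS (by omega)
  exact hfan (containsFan_of_isIndexedMatching hq fun x => hv _ (hqS x))

lemma CliqueFreeOn.not_adj_of_adj_of_adj {s : Set V} (h : G.CliqueFreeOn s 3)
    {x y z : V} (hx : x ∈ s) (hy : y ∈ s) (hz : z ∈ s) (hxy : G.Adj x y) (hxz : G.Adj x z) :
    ¬ G.Adj y z := fun hyz => by
  classical
  exact h (by simp [Set.insert_subset_iff, hx, hy, hz]) (is3Clique_triple_iff.2 ⟨hxy, hxz, hyz⟩)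

lemma sum_card_filter_adj_le_two_mul_card [DecidableRel G.Adj] {O : Finset V}
    (hO : G.CliqueFreeOn O 3) {P : Fin 5 → V} (hP : ∀ i, P i ∈ O)
    (hadj : ∀ i, G.Adj (P i) (P (i + 1))) :
    ∑ i, #{y ∈ O | G.Adj (P i) y} ≤ 2 * #O := by
  have hle : ∀ y ∈ O, #{i | G.Adj (P i) y} ≤ 2 := fun y hy => by
    by_contra! h
    obtain ⟨a, ha, ha'⟩ := Fin.exists_mem_add_one_mem_of_two_lt_card h
    rw [mem_filter] at ha ha'
    exact hO.not_adj_of_adj_of_adj (hP a) (hP (a + 1)) hy (hadj a) ha.2 ha'.2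
  calc ∑ i, #{y ∈ O | G.Adj (P i) y}
      = ∑ y ∈ O, #{i | G.Adj (P i) y} :=
        sum_card_bipartiteAbove_eq_sum_card_bipartiteBelow (fun i y => G.Adj (P i) y)
    _ ≤ ∑ _y ∈ O, 2 := sum_le_sum hle
    _ = 2 * #O := by rw [sum_const, smul_eq_mul, mul_comm]

lemma Walk.length_ne_five_of_cliqueFreeOn [DecidableRel G.Adj] {O : Finset V}
    (hO : G.CliqueFreeOn O 3) {d : ℕ} (hdeg : ∀ x ∈ O, d ≤ #{y ∈ O | G.Adj x y})
    (hd : 2 * #O < 5 * d) {v : V} (c : G.Walk v v) (hc : ∀ x ∈ c.support, x ∈ O) :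
    c.length ≠ 5 := by
  intro hlen
  have hP : ∀ i : Fin 5, c.getVert i ∈ O := fun i => hc _ (c.getVert_mem_support _)
  have hadj : ∀ i : Fin 5, G.Adj (c.getVert i) (c.getVert ↑(i + 1)) := by
    have hstep : ∀ k < 5, G.Adj (c.getVert k) (c.getVert (k + 1)) := fun k hk =>
      c.adj_getVert_succ (hlen ▸ hk)
    have hclose : c.getVert 5 = c.getVert 0 := by rw [← hlen, c.getVert_length, c.getVert_zero]
    intro i
    fin_cases i
    all_goals first | exact hstep _ (by norm_num) | simpa [hclose] using hstep 4 (by norm_num)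
  have := sum_card_filter_adj_le_two_mul_card hO hP hadj
  have := card_nsmul_le_sum univ _ d fun i _ => hdeg _ (hP i)
  simp only [card_univ, Fintype.card_fin, smul_eq_mul] at this
  omega

lemma card_filter_adj_add_card_filter_compl_adj [DecidableEq V] [DecidableRel G.Adj]
    {O : Finset V} {x : V} (hx : x ∈ O) :
    #{y ∈ O | G.Adj x y} + #{y ∈ O | Gᶜ.Adj x y} + 1 = #O := by
  have hsplit := card_filter_add_card_filter_not (s := O.erase x) (G.Adj x)
  have hred : {y ∈ O.erase x | G.Adj x y} = {y ∈ O | G.Adj x y} := by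
    ext y
    simp only [mem_filter, mem_erase]
    exact ⟨fun h => ⟨h.1.2, h.2⟩, fun h => ⟨⟨h.2.ne', h.1⟩, h.2⟩⟩
  have hblue : {y ∈ O.erase x | ¬ G.Adj x y} = {y ∈ O | Gᶜ.Adj x y} := by
    ext y
    simp only [mem_filter, mem_erase, compl_adj]
    tauto
  rw [hred, hblue, card_erase_of_mem hx] at hsplit
  have := card_pos.2 ⟨x, hx⟩
  omega

end SimpleGraph

section Coloring

variable {V : Type*} {R : SimpleGraph V} {n : ℕ} {K : Finset V}

/-- Two red neighbours `w, u ∈ K` of `x` give a red fan centred at `w`: the triangle `w x u`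
together with `n - 1` edges of `K \ {w, u}`. -/
lemma card_filter_adj_le_one_of_notMem [DecidableEq V] [DecidableRel R.Adj]
    (hfan : ¬ ContainsFan R n) (hn : 0 < n) (hK : R.IsClique (K : Set V)) (hKcard : 2 * n ≤ #K)
    {x : V} (hx : x ∉ K) :
    #{w ∈ K | R.Adj x w} ≤ 1 := by
  refine card_le_one.2 fun w hw u hu => by_contra fun hwu => ?_
  rw [mem_filter] at hw hu
  obtain ⟨m, rfl⟩ : ∃ m, n = m + 1 := ⟨n - 1, by omega⟩
  have hu' : u ∈ K.erase w := mem_erase.2 ⟨Ne.symm hwu, hu.1⟩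
  have hcard : #((K.erase w).erase u) = #K - 2 := by
    rw [card_erase_of_mem hu', card_erase_of_mem hw.1]; omega
  have hS : Rᶜ.CliqueFreeOn ↑((K.erase w).erase u) 2 :=
    (cliqueFreeOn_two _).2 fun a ha b hb hab h =>
      h.2 (hK (mem_of_mem_erase (mem_of_mem_erase ha))
        (mem_of_mem_erase (mem_of_mem_erase hb)) hab)
  obtain ⟨q, hq, hqS⟩ := exists_isIndexedMatching_of_cliqueFreeOn_compl (m := 0) m hS (by omega)
  simp only [mem_erase] at hqS
  refine hfan (containsFan_of_isIndexedMatching (w := w)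
    (hq.cons hu.2 (fun y h => hx (h ▸ (hqS y).2.2)) (fun y => (hqS y).1))
    (forall_matchingCons hw.2.symm (hK hw.1 hu.1 hwu) fun y => hK hw.1 (hqS y).2.2 ?_))
  exact Ne.symm (hqS y).2.1

/-- Three vertices outside `K` have at most three red neighbours in `K` altogether, so some
vertex of `K` completes a blue triangle on them to a blue `K₄`. -/
lemma cliqueFreeOn_compl_compl (hfan : ¬ ContainsFan R n) (hK4 : ¬ ContainsK4 Rᶜ)
    (hn : 2 ≤ n) (hK : R.IsClique (K : Set V)) (hKcard : 2 * n ≤ #K) :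
    Rᶜ.CliqueFreeOn (↑K)ᶜ 3 := by
  classical
  intro t ht h3
  obtain ⟨x, y, z, hxy, hxz, hyz, rfl⟩ := is3Clique_iff.1 h3
  simp only [coe_insert, coe_singleton, Set.insert_subset_iff, Set.singleton_subset_iff,
    Set.mem_compl_iff, mem_coe] at ht
  obtain ⟨hx, hy, hz⟩ := ht
  have hle := fun {a} (ha : a ∉ K) =>
    card_filter_adj_le_one_of_notMem hfan (by omega) hK hKcard ha
  have hB : #({w ∈ K | R.Adj x w} ∪ {w ∈ K | R.Adj y w} ∪ {w ∈ K | R.Adj z w}) < #K := by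
    have := card_union_le ({w ∈ K | R.Adj x w} ∪ {w ∈ K | R.Adj y w}) {w ∈ K | R.Adj z w}
    have := card_union_le {w ∈ K | R.Adj x w} {w ∈ K | R.Adj y w}
    have := hle hx
    have := hle hy
    have := hle hz
    omega
  obtain ⟨w, hw, hwB⟩ := exists_mem_notMem_of_card_lt_card hB
  simp only [mem_union, mem_filter, hw, true_and, not_or] at hwB
  have hblue : ∀ a ∉ K, ¬ R.Adj a w → Rᶜ.Adj a w := fun a ha h =>
    (compl_adj R a w).2 ⟨fun e => ha (e ▸ hw), h⟩
  exact hK4 ⟨x, y, z, w, hxy, hxz, hblue x hx hwB.1.1, hyz, hblue y hy hwB.1.2,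
    hblue z hz hwB.2⟩

end Coloring

/-- If an `(Fₙ, K₄)`-free coloring of `K_{6n}` (`n ≥ 4`) contains a red clique `K`
of order `2n`, then there is no blue cycle of length `5` among the vertices
outside `K`. -/
theorem no_blue_C5_outside (n : ℕ) (hn : 4 ≤ n)
    (R : SimpleGraph (Fin (6 * n)))
    (hfree : ¬ ContainsFan R n ∧ ¬ ContainsK4 Rᶜ)
    (K : Finset (Fin (6 * n))) (hKcard : K.card = 2 * n) (hKred : R.IsClique ↑K) :
    ∀ (v : Fin (6 * n)) (c : Rᶜ.Walk v v), c.IsCycle →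
      (∀ x ∈ c.support, x ∉ K) → c.length ≠ 5 := by
  classical
  obtain ⟨hfan, hK4⟩ := hfree
  intro v c _ hc
  have hO : Rᶜ.CliqueFreeOn ↑Kᶜ 3 := by
    rw [coe_compl]
    exact cliqueFreeOn_compl_compl hfan hK4 (by omega) hKred hKcard.ge
  have hOcard : #Kᶜ = 4 * n := by
    rw [card_compl, Fintype.card_fin, hKcard]
    omega
  refine c.length_ne_five_of_cliqueFreeOn hO (d := 2 * n - 1) (fun x hx => ?_) (by omega)
    (by simpa using hc)
  have hred := card_le_of_not_containsFan hfan (S := {y ∈ Kᶜ | R.Adj x y}) (v := x)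
    (CliqueFreeOn.subset _ (coe_subset.2 (filter_subset _ _)) hO)
    (fun y hy => (mem_filter.1 hy).2)
  have hsplit := card_filter_adj_add_card_filter_compl_adj hx (G := R)
  omega
end

section
/- Let n ≥ 4 be an integer, let K_{6n} be given a red/blue edge-coloring that is (F_n, K_4)-free, and suppose there is a set K of 2n vertices all of whose internal edges are red. Then the coloring restricted to the 4n vertices outside K contains no blue cycle of length 7. -/
/-!
A vertex `x` outside the red clique `K` has at most one red neighbour in `K`: two of them, `a` and
`b`, would give a red fan centred at `a`, made of the edge `xb` and a perfect matching of
`K \ {a, b}`. So any three vertices outside `K` have a common blue neighbour in `K`, and a blue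
triangle outside `K` would extend to a blue `K₄`. Since the red graph has no independent triple
outside `K`, any `2n + 1` red neighbours of a vertex contain a red matching of size `n` (chosen
greedily), so every vertex has at most `2n` red and hence at least `2n - 1` blue neighbours among
the `4n` vertices outside `K`. Along a blue `C₇` outside `K`, consecutive vertices have disjoint
blue neighbourhoods, so each vertex lies in at most three of the seven neighbourhoods, and
`7 (2n - 1) ≤ 3 · 4n` fails for `n ≥ 4`.
-/

open SimpleGraph Finset

variable {V : Type*} {G : SimpleGraph V}

def HasMatchingIn (G : SimpleGraph V) (s : Set V) (k : ℕ) : Prop :=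
  ∃ f : Fin k × Bool ↪ V, (∀ p, f p ∈ s) ∧ ∀ i, G.Adj (f (i, false)) (f (i, true))

namespace HasMatchingIn

variable {s t : Set V} {k : ℕ}

theorem zero : HasMatchingIn G s 0 :=
  ⟨⟨fun p => p.1.elim0, fun p => p.1.elim0⟩, fun p => p.1.elim0, fun i => i.elim0⟩

theorem mono (h : HasMatchingIn G s k) (hst : s ⊆ t) : HasMatchingIn G t k :=
  let ⟨f, hfs, hf⟩ := h
  ⟨f, fun p => hst (hfs p), hf⟩

theorem insert_edge {x y : V} (hxy : G.Adj x y) (hx : x ∈ s) (hy : y ∈ s)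
    (h : HasMatchingIn G (s \ {x, y}) k) : HasMatchingIn G s (k + 1) := by
  obtain ⟨f, hfs, hf⟩ := h
  have hfx : ∀ p, f p ≠ x := fun p hp => (hfs p).2 (Or.inl hp)
  have hfy : ∀ p, f p ≠ y := fun p hp => (hfs p).2 (Or.inr hp)
  let g : Fin (k + 1) × Bool → V := fun p =>
    Fin.cases (bif p.2 then y else x) (fun j => f (j, p.2)) p.1
  refine ⟨⟨g, ?_⟩, ?_, ?_⟩
  · rintro ⟨i, a⟩ ⟨j, b⟩ h
    induction i using Fin.cases <;> induction j using Fin.cases <;>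
      cases a <;> cases b <;> simp_all [g, hxy.ne, hxy.ne.symm, f.injective.eq_iff]
  · rintro ⟨i, a⟩
    induction i using Fin.cases
    · cases a <;> simpa [g]
    · exact (hfs _).1
  · intro i
    induction i using Fin.cases
    · exact hxy
    · exact hf _

end HasMatchingIn

theorem hasMatchingIn_of_forall_not_isNIndepSet {d : ℕ} :
    ∀ {k : ℕ} {s : Finset V}, (∀ t ⊆ s, ¬ G.IsNIndepSet d t) → 2 * k + d ≤ #s + 2 →
      HasMatchingIn G s k
  | 0, _, _, _ => HasMatchingIn.zero
  | k + 1, s, hs, hk => by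
    classical
    obtain ⟨t, hts, htd⟩ := exists_subset_card_eq (show d ≤ #s by omega)
    obtain ⟨x, hx, y, hy, hxy', hxy⟩ : ∃ x ∈ t, ∃ y ∈ t, x ≠ y ∧ G.Adj x y := by
      by_contra! h
      exact hs t hts ⟨fun x hx y hy hxy => h x hx y hy hxy, htd⟩
    have hsxy : #(s \ {x, y}) = #s - 2 := by
      rw [card_sdiff_of_subset (by simp [insert_subset_iff, hts hx, hts hy]), card_pair hxy']
    refine HasMatchingIn.insert_edge hxy (hts hx) (hts hy) ?_
    have := hasMatchingIn_of_forall_not_isNIndepSet (k := k) (s := s \ {x, y})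
      (fun u hu => hs u (hu.trans sdiff_subset)) (by omega)
    simpa using this

theorem IsClique.hasMatchingIn {s : Finset V} {k : ℕ}
    (hs : G.IsClique (s : Set V)) (hk : 2 * k ≤ #s) : HasMatchingIn G s k := by
  classical
  refine hasMatchingIn_of_forall_not_isNIndepSet (d := 2) (fun t hts ht => ?_) (by omega)
  obtain ⟨x, y, hxy, rfl⟩ := card_eq_two.1 ht.card_eq
  exact ht.isIndepSet (by simp) (by simp) hxy (hs (hts (by simp)) (hts (by simp)) hxy)

theorem containsFan_of_hasMatchingIn_neighborSet {n : ℕ} {c : V}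
    (h : HasMatchingIn G (G.neighborSet c) n) : ContainsFan G n := by
  obtain ⟨f, hfc, hf⟩ := h
  have hc : c ∉ Set.range f := by
    rintro ⟨p, hp⟩
    exact (hfc p).ne hp.symm
  refine ⟨f.optionElim c hc, ?_⟩
  rintro (_ | ⟨i, a⟩) (_ | ⟨j, b⟩) ⟨hne, huv⟩
  · exact absurd rfl hne
  · exact hfc _
  · exact (hfc _).symm
  · obtain ⟨i, a, b, ⟨rfl, rfl⟩, ⟨rfl, rfl⟩⟩ := by simpa using huv
    cases a <;> cases b <;> simp_all [(hf _).symm]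

section RedClique

variable {R : SimpleGraph V} {n : ℕ} {K : Finset V}

theorem eq_of_adj_of_adj_of_isClique (hfan : ¬ ContainsFan R n) (hK : 2 * n ≤ #K)
    (hKred : R.IsClique (K : Set V)) {x a b : V} (hx : x ∉ K) (ha : a ∈ K) (hb : b ∈ K)
    (hxa : R.Adj x a) (hxb : R.Adj x b) : a = b := by
  classical
  by_contra hab
  refine hfan (containsFan_of_hasMatchingIn_neighborSet (c := a) ?_)
  obtain _ | m := n
  · exact HasMatchingIn.zero
  have hrest : HasMatchingIn R ↑(K \ {a, b}) m := by
    refine IsClique.hasMatchingIn (hKred.subset (by simp)) ?_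
    rw [card_sdiff_of_subset (by simp [insert_subset_iff, ha, hb]), card_pair hab]
    omega
  refine HasMatchingIn.insert_edge hxb hxa.symm (hKred ha hb hab) (hrest.mono ?_)
  intro y hy
  simp only [coe_sdiff, coe_insert, coe_singleton, Set.mem_sdiff, Set.mem_insert_iff,
    Set.mem_singleton_iff, mem_coe, not_or] at hy ⊢
  exact ⟨hKred ha hy.1 (Ne.symm hy.2.1), fun hyx => hx (hyx ▸ hy.1), hy.2.2⟩

theorem not_isNClique_three_compl_of_disjoint (hn : 2 ≤ n) (hfan : ¬ ContainsFan R n)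
    (hK4 : ¬ ContainsK4 Rᶜ) (hK : 2 * n ≤ #K) (hKred : R.IsClique (K : Set V))
    {t : Finset V} (htK : Disjoint t K) : ¬ Rᶜ.IsNClique 3 t := by
  classical
  intro ht
  have hred : #(t.biUnion fun x => {w ∈ K | R.Adj x w}) ≤ #t * 1 := by
    refine card_biUnion_le_card_mul _ _ _ fun x hx => card_le_one.2 fun a ha b hb => ?_
    rw [mem_filter] at ha hb
    exact eq_of_adj_of_adj_of_isClique hfan hK hKred (disjoint_left.1 htK hx) ha.1 hb.1 ha.2 hb.2
  obtain ⟨w, hwK, hw⟩ := exists_mem_notMem_of_card_lt_card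
    (show #(t.biUnion fun x => {w ∈ K | R.Adj x w}) < #K by rw [ht.card_eq] at hred; omega)
  have hwt : ∀ x ∈ t, Rᶜ.Adj w x := fun x hx => by
    refine (compl_adj R w x).2 ⟨?_, fun hwx => ?_⟩
    · rintro rfl
      exact disjoint_left.1 htK hx hwK
    · exact hw (mem_biUnion.2 ⟨x, hx, mem_filter.2 ⟨hwK, hwx.symm⟩⟩)
  obtain ⟨a, b, c, hab, hac, hbc, rfl⟩ := is3Clique_iff.1 ht
  exact hK4 ⟨w, a, b, c, hwt a (by simp), hwt b (by simp), hwt c (by simp), hab, hac, hbc⟩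

theorem card_le_of_forall_adj_of_disjoint (hn : 2 ≤ n) (hfan : ¬ ContainsFan R n)
    (hK4 : ¬ ContainsK4 Rᶜ) (hK : 2 * n ≤ #K) (hKred : R.IsClique (K : Set V))
    {v : V} {S : Finset V} (hSK : Disjoint S K) (hSv : ∀ x ∈ S, R.Adj v x) : #S ≤ 2 * n := by
  by_contra! hS
  refine hfan (containsFan_of_hasMatchingIn_neighborSet (c := v) (HasMatchingIn.mono
    (hasMatchingIn_of_forall_not_isNIndepSet (d := 3) (fun t htS ht => ?_) (by omega)) hSv))
  exact not_isNClique_three_compl_of_disjoint hn hfan hK4 hK hKred (disjoint_of_subset_left htS hSK)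
    ((isNClique_compl R).2 ht)

theorem card_compl_le_card_filter_compl_adj [Fintype V] [DecidableEq V] [DecidableRel R.Adj]
    (hn : 2 ≤ n) (hfan : ¬ ContainsFan R n)
    (hK4 : ¬ ContainsK4 Rᶜ) (hK : 2 * n ≤ #K) (hKred : R.IsClique (K : Set V)) (u : V) :
    #Kᶜ ≤ #{x ∈ Kᶜ | Rᶜ.Adj u x} + 2 * n + 1 := by
  have hred : #{x ∈ Kᶜ | R.Adj u x} ≤ 2 * n :=
    card_le_of_forall_adj_of_disjoint hn hfan hK4 hK hKred
      (disjoint_left.2 fun x hx => mem_compl.1 (mem_filter.1 hx).1) fun x hx => (mem_filter.1 hx).2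
  have hcover : Kᶜ ⊆ insert u ({x ∈ Kᶜ | Rᶜ.Adj u x} ∪ {x ∈ Kᶜ | R.Adj u x}) := by
    intro x hx
    by_cases hux : u = x
    · exact hux ▸ mem_insert_self _ _
    · by_cases hred : R.Adj u x <;> simp [hx, hux, hred]
  calc #Kᶜ ≤ #{x ∈ Kᶜ | Rᶜ.Adj u x} + #{x ∈ Kᶜ | R.Adj u x} + 1 :=
        (card_le_card hcover).trans ((card_insert_le _ _).trans (by grw [card_union_le]))
    _ ≤ #{x ∈ Kᶜ | Rᶜ.Adj u x} + 2 * n + 1 := by omega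

end RedClique

set_option maxRecDepth 100000 in
theorem Fin.card_le_three_of_forall_add_one_notMem (I : Finset (Fin 7))
    (hI : ∀ i ∈ I, i + 1 ∉ I) : #I ≤ 3 := by
  revert I
  decide

theorem sum_card_le_three_mul_of_disjoint_add_one [DecidableEq V] {s : Finset V}
    (N : Fin 7 → Finset V) (hN : ∀ i, N i ⊆ s) (hdisj : ∀ i, Disjoint (N i) (N (i + 1))) :
    ∑ i, #(N i) ≤ 3 * #s := by
  have hcount : ∀ x ∈ s, #{i | x ∈ N i} ≤ 3 := fun x _ =>
    Fin.card_le_three_of_forall_add_one_notMem _ fun i hi hi' =>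
      disjoint_left.1 (hdisj i) (mem_filter.1 hi).2 (mem_filter.1 hi').2
  calc ∑ i, #(N i) = ∑ i, ∑ x ∈ s, if x ∈ N i then 1 else 0 := by
        refine sum_congr rfl fun i _ => ?_
        rw [← card_filter, filter_mem_eq_inter, inter_eq_right.2 (hN i)]
    _ = ∑ x ∈ s, #{i | x ∈ N i} := by
        rw [sum_comm]
        simp only [card_filter]
    _ ≤ ∑ _x ∈ s, 3 := sum_le_sum hcount
    _ = 3 * #s := by rw [sum_const, smul_eq_mul, mul_comm]

theorem SimpleGraph.Walk.adj_getVert_add_one {v : V} {m : ℕ} (c : G.Walk v v)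
    (hc : c.length = m + 1) (i : Fin (m + 1)) : G.Adj (c.getVert i) (c.getVert ↑(i + 1)) := by
  rw [Fin.val_add_one]
  split_ifs with hi
  · subst hi
    have h := c.adj_getVert_succ (i := m) (by omega)
    rw [← hc, c.getVert_length] at h
    simpa using h
  · exact c.adj_getVert_succ (by omega)

/-- If an `(Fₙ, K₄)`-free coloring of `K_{6n}` (`n ≥ 4`) contains a red clique `K`
of order `2n`, then there is no blue cycle of length `7` among the vertices
outside `K`. -/
theorem no_blue_C7_outside (n : ℕ) (hn : 4 ≤ n)
    (R : SimpleGraph (Fin (6 * n)))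
    (hfree : ¬ ContainsFan R n ∧ ¬ ContainsK4 Rᶜ)
    (K : Finset (Fin (6 * n))) (hKcard : K.card = 2 * n) (hKred : R.IsClique ↑K) :
    ∀ (v : Fin (6 * n)) (c : Rᶜ.Walk v v), c.IsCycle →
      (∀ x ∈ c.support, x ∉ K) → c.length ≠ 7 := by
  classical
  obtain ⟨hfan, hK4⟩ := hfree
  intro v c _ hout hlen
  let w : Fin 7 → Fin (6 * n) := fun i => c.getVert i
  have hwK : ∀ i, w i ∉ K := fun i => hout _ (c.getVert_mem_support _)
  have hadj : ∀ i, Rᶜ.Adj (w i) (w (i + 1)) := c.adj_getVert_add_one hlen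
  let N : Fin 7 → Finset (Fin (6 * n)) := fun i => {x ∈ Kᶜ | Rᶜ.Adj (w i) x}
  have hdisj : ∀ i, Disjoint (N i) (N (i + 1)) := fun i => disjoint_left.2 fun x hx hx' => by
    rw [mem_filter] at hx hx'
    refine not_isNClique_three_compl_of_disjoint (by omega) hfan hK4 hKcard.ge hKred
      (t := {w i, w (i + 1), x}) ?_ (is3Clique_triple_iff.2 ⟨hadj i, hx.2, hx'.2⟩)
    simp [hwK, mem_compl.1 hx.1]
  have hcompl : #Kᶜ = 4 * n := by rw [card_compl, Fintype.card_fin, hKcard]; omega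
  have hlower : 7 * (2 * n - 1) ≤ ∑ i, #(N i) := by
    simpa using card_nsmul_le_sum univ (fun i => #(N i)) (2 * n - 1) fun i _ => by
      have : #Kᶜ ≤ #(N i) + 2 * n + 1 :=
        card_compl_le_card_filter_compl_adj (by omega) hfan hK4 hKcard.ge hKred (w i)
      omega
  have hupper := sum_card_le_three_mul_of_disjoint_add_one N (fun i => filter_subset _ _) hdisj
  omega
end

section
/- Let n ≥ 4 be an integer and let K_{6n} be given a red/blue edge-coloring that is (F_n, K_4)-free. Then the clique number of the subgraph formed by the red edges is exactly 2n. -/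
open SimpleGraph

/-!
A red `K_{2n+1}` contains `F_n`, so only a red `K_{2n}` has to be found. Suppose there is none and
write `N(x)`, `d(x)` and `h(x) = 6n - 1 - d(x)` for the red neighbourhood, degree and blue degree.
For a blue edge `uv` the vertices outside `N[u] ∪ N[v]` form a red clique (a blue edge among them
would complete a blue `K_4`), whence `|N(u) ∩ N(v)| + 4n ≤ d(u) + d(v) + 1`. Double counting the
triples `(x, u, v)` with `uv` blue and `u, v ∈ N(x)`, some vertex `x` has at most
`h(x) (2 d(x) + 1 - 4n)` ordered blue pairs inside `N(x)`.

This is refuted with a maximum matching `W` of the red graph on `N(x)`. As there is no red `F_n`,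
`|W| ≤ 2n - 2`; the unmatched vertices are pairwise blue, hence at most three, so
`d(x) ≤ 2n + 1`. For `d(x) ≤ 2n - 1` the bound fails trivially. For `d(x) ∈ {2n, 2n + 1}` the
exchanges along short augmenting paths, together with the absence of a blue `K_4` and of a red
`K_{2n}`, force at least `4n`, resp. `16n - 18`, ordered blue pairs in `N(x)`, which is too many
when `n ≥ 4`.
-/

open Finset

variable {V : Type*} {G : SimpleGraph V}

/-- `σ` is the partner map of a perfect matching of `G` restricted to `W`. -/
def IsPairing (G : SimpleGraph V) (W : Finset V) (σ : V → V) : Prop :=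
  ∀ w ∈ W, σ w ∈ W ∧ σ (σ w) = w ∧ G.Adj w (σ w)

namespace IsPairing

variable {W : Finset V} {σ : V → V}

lemma mem (h : IsPairing G W σ) {w : V} (hw : w ∈ W) : σ w ∈ W := (h w hw).1

lemma involutive (h : IsPairing G W σ) {w : V} (hw : w ∈ W) : σ (σ w) = w := (h w hw).2.1

lemma adj (h : IsPairing G W σ) {w : V} (hw : w ∈ W) : G.Adj w (σ w) := (h w hw).2.2

lemma ne (h : IsPairing G W σ) {w : V} (hw : w ∈ W) : σ w ≠ w := (h.adj hw).ne'

lemma injOn (h : IsPairing G W σ) : Set.InjOn σ W := fun v hv w hw hvw => by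
  rw [← h.involutive hv, ← h.involutive hw, hvw]

lemma card_filter_partner_le (h : IsPairing G W σ) (q : V → Prop) [DecidablePred q] :
    #{w ∈ W | q (σ w)} ≤ #{w ∈ W | q w} := by
  refine card_le_card_of_injOn σ (fun w hw => ?_)
    (h.injOn.mono (coe_subset.2 (filter_subset _ _)))
  rw [mem_coe, mem_filter] at hw ⊢
  exact ⟨h.mem hw.1, hw.2⟩

lemma card_eq_two_mul [LinearOrder V] (h : IsPairing G W σ) :
    #W = 2 * #{w ∈ W | w < σ w} := by
  have hle : #{w ∈ W | ¬ w < σ w} ≤ #{w ∈ W | w < σ w} := by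
    refine card_le_card_of_injOn σ (fun w hw => ?_)
      (h.injOn.mono (coe_subset.2 (filter_subset _ _)))
    rw [mem_coe, mem_filter] at hw ⊢
    refine ⟨h.mem hw.1, ?_⟩
    rw [h.involutive hw.1]
    exact lt_of_le_of_ne (not_lt.1 hw.2) (h.ne hw.1)
  have hge : #{w ∈ W | w < σ w} ≤ #{w ∈ W | ¬ w < σ w} := by
    refine card_le_card_of_injOn σ (fun w hw => ?_)
      (h.injOn.mono (coe_subset.2 (filter_subset _ _)))
    rw [mem_coe, mem_filter] at hw ⊢
    rw [h.involutive hw.1]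
    exact ⟨h.mem hw.1, hw.2.asymm⟩
  have := card_filter_add_card_filter_not (s := W) (fun w => w < σ w)
  omega

lemma even_card (h : IsPairing G W σ) : Even #W := by
  classical
  let : LinearOrder V := linearOrderOfSTO WellOrderingRel
  exact ⟨_, (h.card_eq_two_mul).trans (two_mul _)⟩

variable [DecidableEq V]

lemma card_le_card_filter_add (h : IsPairing G W σ) {p q : V → Prop} [DecidablePred p]
    [DecidablePred q] (hpq : ∀ w ∈ W, p w ∨ q (σ w)) :
    #W ≤ #{w ∈ W | p w} + #{w ∈ W | q w} :=
  calc #W ≤ #({w ∈ W | p w} ∪ {w ∈ W | q (σ w)}) := by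
        refine card_le_card fun w hw => ?_
        rcases hpq w hw with hp | hq
        · exact mem_union_left _ (mem_filter.2 ⟨hw, hp⟩)
        · exact mem_union_right _ (mem_filter.2 ⟨hw, hq⟩)
    _ ≤ #{w ∈ W | p w} + #{w ∈ W | q (σ w)} := card_union_le _ _
    _ ≤ _ := Nat.add_le_add_left (h.card_filter_partner_le q) _

lemma insert_insert (h : IsPairing G W σ) {u v : V} (hu : u ∉ W) (hv : v ∉ W)
    (huv : G.Adj u v) :
    IsPairing G (insert u (insert v W))
      fun t => if t = u then v else if t = v then u else σ t := by
  have hvu : v ≠ u := huv.ne'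
  intro t ht
  simp only [mem_insert] at ht
  rcases ht with rfl | rfl | ht
  · simp [hvu, huv]
  · simp [hvu, huv.symm]
  · have htu : t ≠ u := by rintro rfl; exact hu ht
    have htv : t ≠ v := by rintro rfl; exact hv ht
    have hσu : σ t ≠ u := by intro e; exact hu (e ▸ h.mem ht)
    have hσv : σ t ≠ v := by intro e; exact hv (e ▸ h.mem ht)
    simp [htu, htv, hσu, hσv, h.mem ht, h.involutive ht, h.adj ht]

lemma erase_erase (h : IsPairing G W σ) {w : V} (hw : w ∈ W) :
    IsPairing G ((W.erase w).erase (σ w)) σ := by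
  intro t ht
  simp only [mem_erase] at ht
  obtain ⟨htσ, htw, ht⟩ := ht
  refine ⟨mem_erase.2 ⟨?_, mem_erase.2 ⟨?_, h.mem ht⟩⟩, h.involutive ht, h.adj ht⟩
  · intro e; exact htw (h.injOn ht hw e)
  · intro e; exact htσ (by rw [← e, h.involutive ht])

lemma card_erase_erase (h : IsPairing G W σ) {w : V} (hw : w ∈ W) :
    #((W.erase w).erase (σ w)) + 2 = #W := by
  have hσw : σ w ∈ W.erase w := mem_erase.2 ⟨h.ne hw, h.mem hw⟩
  have : 1 < #W := one_lt_card.2 ⟨w, hw, σ w, h.mem hw, (h.ne hw).symm⟩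
  rw [card_erase_of_mem hσw, card_erase_of_mem hw]
  omega

end IsPairing

lemma exists_isPairing_of_isClique [DecidableEq V] {s : Finset V} (hs : G.IsClique s)
    (he : Even #s) : ∃ σ, IsPairing G s σ := by
  obtain ⟨k, hk⟩ := he
  induction k generalizing s with
  | zero => exact ⟨id, fun w hw => absurd hw (by simp_all)⟩
  | succ k ih =>
    obtain ⟨u, hu⟩ := card_pos.1 (by omega : 0 < #s)
    obtain ⟨v, hv⟩ := card_pos.1 (by rw [card_erase_of_mem hu]; omega : 0 < #(s.erase u))
    obtain ⟨σ, hσ⟩ := ih (s := (s.erase u).erase v)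
      (hs.subset fun t ht => mem_of_mem_erase (mem_of_mem_erase ht))
      (by rw [card_erase_of_mem hv, card_erase_of_mem hu]; omega)
    have huv : G.Adj u v :=
      hs (by simp [hu]) (by simp [mem_of_mem_erase hv]) (ne_of_mem_erase hv).symm
    refine ⟨fun t => if t = u then v else if t = v then u else σ t, ?_⟩
    convert hσ.insert_insert (by simp) (by simp) huv using 1
    rw [insert_erase hv, insert_erase hu]

lemma containsFan_of_blades {n : ℕ} {x : V} {g τ : Fin n → V}
    (hinj : Function.Injective fun o : Option (Fin n × Bool) =>
      o.elim x fun p => if p.2 then τ p.1 else g p.1)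
    (hg : ∀ i, G.Adj x (g i)) (hτ : ∀ i, G.Adj x (τ i)) (hgτ : ∀ i, G.Adj (g i) (τ i)) :
    ContainsFan G n := by
  refine ⟨⟨_, hinj⟩, ?_⟩
  rintro (_ | ⟨i, a⟩) (_ | ⟨j, b⟩) ⟨hne, hadj⟩
  · exact absurd rfl hne
  · cases b <;> simp [hg, hτ]
  · cases a <;> simp [(hg i).symm, (hτ i).symm]
  · obtain rfl : i = j := by simpa [eq_comm] using hadj
    cases a <;> cases b
    · exact absurd rfl hne
    · exact hgτ i
    · exact (hgτ i).symm
    · exact absurd rfl hne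

lemma IsPairing.containsFan {W : Finset V} {σ : V → V} {n : ℕ} {x : V} (h : IsPairing G W σ)
    (hx : ∀ w ∈ W, G.Adj x w) (hn : 2 * n ≤ #W) : ContainsFan G n := by
  classical
  -- an arbitrary well-order selects the endpoint `w < σ w` of each pair as its first vertex
  let : LinearOrder V := linearOrderOfSTO WellOrderingRel
  obtain ⟨t, ht, htn⟩ : ∃ t ⊆ {w ∈ W | w < σ w}, #t = n :=
    exists_subset_card_eq (by rw [h.card_eq_two_mul] at hn; omega)
  let g : Fin n → V := fun i => (t.equivFin.symm (Fin.cast htn.symm i) : V)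
  have hgW : ∀ i, g i ∈ W := fun i => (mem_filter.1 (ht (t.equivFin.symm _).2)).1
  have hglt : ∀ i, g i < σ (g i) := fun i => (mem_filter.1 (ht (t.equivFin.symm _).2)).2
  have hginj : Function.Injective g := fun i j e => by
    simpa [g, ← Subtype.ext_iff] using e
  have hxW : x ∉ W := fun hxW => G.irrefl (hx x hxW)
  have hgσ : ∀ i j, g i ≠ σ (g j) := fun i j e => by
    have := hglt i
    rw [e, h.involutive (hgW j)] at this
    exact lt_asymm this (hglt j)
  refine containsFan_of_blades ?_ (fun i => hx _ (hgW i)) (fun i => hx _ (h.mem (hgW i)))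
    (fun i => h.adj (hgW i))
  rintro (_ | ⟨i, _ | _⟩) (_ | ⟨j, _ | _⟩) e <;>
    simp only [Option.elim, Bool.false_eq_true, if_false, if_true] at e
  · rfl
  · exact absurd (e ▸ hgW j) hxW
  · exact absurd (e ▸ h.mem (hgW j)) hxW
  · exact absurd (e ▸ hgW i) hxW
  · rw [hginj e]
  · exact absurd e (hgσ i j)
  · exact absurd (e ▸ h.mem (hgW i)) hxW
  · exact absurd e.symm (hgσ j i)
  · rw [hginj (h.injOn (hgW i) (hgW j) e)]

structure IsMaxPairing (G : SimpleGraph V) (s W : Finset V) (σ : V → V) : Prop where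
  subset : W ⊆ s
  isPairing : IsPairing G W σ
  card_le : ∀ W' τ, W' ⊆ s → IsPairing G W' τ → #W' ≤ #W

lemma exists_isMaxPairing (G : SimpleGraph V) (s : Finset V) : ∃ W σ, IsMaxPairing G s W σ := by
  classical
  obtain ⟨W, hW, hmax⟩ := exists_max_image {W ∈ s.powerset | ∃ σ, IsPairing G W σ} card
    ⟨∅, mem_filter.2 ⟨empty_mem_powerset s, id, fun w hw => absurd hw (notMem_empty w)⟩⟩
  obtain ⟨hWs, σ, hσ⟩ := mem_filter.1 hW
  exact ⟨W, σ, mem_powerset.1 hWs, hσ, fun W' τ hW' hτ =>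
    hmax W' (mem_filter.2 ⟨mem_powerset.2 hW', τ, hτ⟩)⟩

lemma card_insert_insert [DecidableEq V] {T : Finset V} {u v : V} (hu : u ∉ T) (hv : v ∉ T)
    (huv : u ≠ v) : #(insert u (insert v T)) = #T + 2 := by
  rw [card_insert_of_notMem (by simp [huv, hu]), card_insert_of_notMem hv]

namespace IsMaxPairing

variable [DecidableEq V] {s W : Finset V} {σ : V → V} {u v : V}

lemma card_add_two_le (hM : IsMaxPairing G s W σ) {T : Finset V} {τ : V → V}
    (hτ : IsPairing G T τ) (hT : T ⊆ s) (hu : u ∈ s) (hv : v ∈ s) (huT : u ∉ T)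
    (hvT : v ∉ T) (huv : G.Adj u v) : #T + 2 ≤ #W := by
  rw [← card_insert_insert huT hvT huv.ne]
  exact hM.card_le _ _ (insert_subset hu (insert_subset hv hT)) (hτ.insert_insert huT hvT huv)

lemma not_adj (hM : IsMaxPairing G s W σ) (hu : u ∈ s \ W) (hv : v ∈ s \ W) :
    ¬ G.Adj u v := by
  rw [mem_sdiff] at hu hv
  intro huv
  have := hM.card_add_two_le hM.isPairing hM.subset hu.1 hv.1 hu.2 hv.2 huv
  omega

/-- Two unpaired vertices joined to the two ends of a paired edge would give an augmenting
path of length three. -/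
lemma eq_of_adj_of_adj_partner (hM : IsMaxPairing G s W σ) (hu : u ∈ s \ W) (hv : v ∈ s \ W)
    {w : V} (hw : w ∈ W) (huw : G.Adj u w) (hvw : G.Adj v (σ w)) : u = v := by
  by_contra huv
  rw [mem_sdiff] at hu hv
  have h := hM.isPairing
  have hW₁ : (W.erase w).erase (σ w) ⊆ W := (erase_subset _ _).trans (erase_subset _ _)
  have hvσ : v ≠ σ w := by rintro rfl; exact hv.2 (h.mem hw)
  have hvT : v ∉ (W.erase w).erase (σ w) := fun h' => hv.2 (hW₁ h')
  have hσT : σ w ∉ (W.erase w).erase (σ w) := by simp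
  have := hM.card_add_two_le ((h.erase_erase hw).insert_insert hvT hσT hvw)
    (insert_subset hv.1 (insert_subset (hM.subset (h.mem hw)) (hW₁.trans hM.subset)))
    hu.1 (hM.subset hw) (by simp [huv, hu.2]; rintro rfl; exact hu.2 (h.mem hw))
    (by simp [(h.ne hw).symm]; rintro rfl; exact hv.2 hw) huw
  rw [card_insert_insert hvT hσT hvσ, h.card_erase_erase hw] at this
  omega

/-- Swapping the paired edges `w, σ w` and `w', σ w'` for the path `u, σ w, w, w', σ w', v`. -/
lemma eq_of_adj_partner_of_adj (hM : IsMaxPairing G s W σ) (hu : u ∈ s \ W) (hv : v ∈ s \ W)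
    {w w' : V} (hw : w ∈ W) (hw' : w' ∈ W) (hw'σ : w' ≠ σ w) (huw : G.Adj u (σ w))
    (hww' : G.Adj w w') (hvw' : G.Adj v (σ w')) : u = v := by
  by_contra huv
  rw [mem_sdiff] at hu hv
  have h := hM.isPairing
  have hw'₁ : w' ∈ (W.erase w).erase (σ w) := by simp [hw'σ, hww'.ne', hw']
  have h₂ := (h.erase_erase hw).erase_erase hw'₁
  have hW₂ : (((W.erase w).erase (σ w)).erase w').erase (σ w') ⊆ W :=
    fun t ht => by simp only [mem_erase] at ht; exact ht.2.2.2.2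
  have hσw' : σ w' ≠ w := fun e => hw'σ (by rw [← e, h.involutive hw'])
  have hσσ : σ w ≠ σ w' := fun e => hww'.ne (h.injOn hw hw' e)
  have hu' : ∀ {t}, t ∈ W → u ≠ t := fun ht e => hu.2 (e ▸ ht)
  have hv' : ∀ {t}, t ∈ W → v ≠ t := fun ht e => hv.2 (e ▸ ht)
  have hwT : w ∉ (((W.erase w).erase (σ w)).erase w').erase (σ w') := by simp
  have hw'T : w' ∉ (((W.erase w).erase (σ w)).erase w').erase (σ w') := by simp
  have hvT : v ∉ insert w (insert w' ((((W.erase w).erase (σ w)).erase w').erase (σ w'))) := by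
    simp [hv' hw, hv' hw', hv.2]
  have hσ'T :
      σ w' ∉ insert w (insert w' ((((W.erase w).erase (σ w)).erase w').erase (σ w'))) := by
    simp [hσw', h.ne hw']
  have := hM.card_add_two_le ((h₂.insert_insert hwT hw'T hww').insert_insert hvT hσ'T hvw')
    (by intro t ht; simp only [mem_insert] at ht
        rcases ht with rfl | rfl | rfl | rfl | ht
        exacts [hv.1, hM.subset (h.mem hw'), hM.subset hw, hM.subset hw', hM.subset (hW₂ ht)])
    hu.1 (hM.subset (h.mem hw))
    (by simp [huv, hu' hw, hu' hw', hu' (h.mem hw'), hu.2])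
    (by simp [hσσ, hw'σ.symm, (hv' (h.mem hw)).symm, h.ne hw]) huw
  rw [card_insert_insert hvT hσ'T (hv' (h.mem hw')), card_insert_insert hwT hw'T hww'.ne]
    at this
  have := (h.erase_erase hw).card_erase_erase hw'₁
  have := h.card_erase_erase hw
  omega

/-- The rest of the clique `W` can be re-paired at will. -/
lemma eq_of_isClique (hM : IsMaxPairing G s W σ) (hW : G.IsClique W) (hu : u ∈ s \ W)
    (hv : v ∈ s \ W) {z w : V} (hz : z ∈ W) (hw : w ∈ W) (hzw : z ≠ w) (huz : G.Adj u z)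
    (hvw : G.Adj v w) : u = v := by
  by_contra huv
  rw [mem_sdiff] at hu hv
  have hcard : #((W.erase z).erase w) + 2 = #W := by
    rw [card_erase_of_mem (mem_erase.2 ⟨hzw.symm, hw⟩), card_erase_of_mem hz]
    have : 1 < #W := one_lt_card.2 ⟨z, hz, w, hw, hzw⟩
    omega
  have hW₁ : (W.erase z).erase w ⊆ W := (erase_subset _ _).trans (erase_subset _ _)
  obtain ⟨τ, hτ⟩ := exists_isPairing_of_isClique (hW.subset (coe_subset.2 hW₁))
    (by have := hM.isPairing.even_card; rw [← hcard] at this; simpa [Nat.even_add] using this)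
  have hvT : v ∉ (W.erase z).erase w := fun h' => hv.2 (hW₁ h')
  have hwT : w ∉ (W.erase z).erase w := by simp
  have := hM.card_add_two_le (hτ.insert_insert hvT hwT hvw)
    (insert_subset hv.1 (insert_subset (hM.subset hw) (hW₁.trans hM.subset)))
    hu.1 (hM.subset hz) (by simp [huv, hu.2]; rintro rfl; exact hu.2 hw)
    (by simp [hzw]; rintro rfl; exact hv.2 hz) huz
  rw [card_insert_insert hvT hwT (by rintro rfl; exact hv.2 hw)] at this
  omega

end IsMaxPairing

section Interedges

variable (H : SimpleGraph V) [DecidableRel H.Adj]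

lemma card_interedges_eq_sum (s t : Finset V) :
    #(H.interedges s t) = ∑ a ∈ s, #{b ∈ t | H.Adj a b} := by
  rw [interedges_def, card_filter, sum_product]
  simp_rw [card_filter]

lemma card_interedges_comm (s t : Finset V) : #(H.interedges s t) = #(H.interedges t s) :=
  have : Std.Symm H.Adj := ⟨fun _ _ h => h.symm⟩
  Rel.card_interedges_comm s t

lemma card_interedges_union_self [DecidableEq V] {s t : Finset V} (h : Disjoint s t) :
    #(H.interedges (s ∪ t) (s ∪ t)) =
      #(H.interedges s s) + 2 * #(H.interedges s t) + #(H.interedges t t) := by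
  have hl : ∀ r, H.interedges (s ∪ t) r = H.interedges s r ∪ H.interedges t r := fun r => by
    ext; simp only [mem_interedges_iff, mem_union]; tauto
  have hr : ∀ r, H.interedges r (s ∪ t) = H.interedges r s ∪ H.interedges r t := fun r => by
    ext; simp only [mem_interedges_iff, mem_union]; tauto
  rw [hl, card_union_of_disjoint (H.interedges_disjoint_left h _), hr, hr,
    card_union_of_disjoint (H.interedges_disjoint_right _ h),
    card_union_of_disjoint (H.interedges_disjoint_right _ h), card_interedges_comm H t s]
  ring

lemma interedges_eq_product {s t : Finset V} (h : ∀ a ∈ s, ∀ b ∈ t, H.Adj a b) :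
    H.interedges s t = s ×ˢ t :=
  filter_true_of_mem fun _ he => h _ (mem_product.1 he).1 _ (mem_product.1 he).2

lemma interedges_self_eq_offDiag [DecidableEq V] {s : Finset V} (h : H.IsClique (s : Set V)) :
    H.interedges s s = s.offDiag := by
  ext ⟨a, b⟩
  simp only [mk_mem_interedges_iff, mem_offDiag]
  exact ⟨fun ⟨ha, hb, hab⟩ => ⟨ha, hb, hab.ne⟩,
    fun ⟨ha, hb, hab⟩ => ⟨ha, hb, h ha hb hab⟩⟩

end Interedges

section Cliques

variable {k : ℕ} {s t : Finset V}

lemma card_lt_of_isClique (hk : G.CliqueFree k) (ht : G.IsClique (t : Set V)) : #t < k := by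
  by_contra! h
  obtain ⟨r, hrt, hr⟩ := exists_subset_card_eq h
  exact hk r ⟨ht.subset (coe_subset.2 hrt), hr⟩

lemma card_add_one_lt_of_isClique [DecidableEq V] {x : V} (hk : G.CliqueFree k)
    (hx : ∀ v ∈ s, G.Adj x v) (hts : t ⊆ s) (ht : G.IsClique (t : Set V)) : #t + 1 < k := by
  have hxt : x ∉ t := fun h => G.irrefl (hx x (hts h))
  rw [← card_insert_of_notMem hxt]
  refine card_lt_of_isClique hk ?_
  rw [coe_insert, isClique_insert]
  exact ⟨ht, fun v hv _ => hx v (hts hv)⟩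

lemma exists_adj_of_isClique_compl [DecidableEq V] (hk : Gᶜ.CliqueFree (k + 1))
    (ht : Gᶜ.IsClique (t : Set V)) (hcard : #t = k) {v : V} (hv : v ∉ t) :
    ∃ u ∈ t, G.Adj v u := by
  by_contra! h
  refine (card_lt_of_isClique hk (t := insert v t) ?_).ne
    (by rw [card_insert_of_notMem hv, hcard])
  rw [coe_insert, isClique_insert]
  exact ⟨ht, fun u hu hvu => (compl_adj G v u).2 ⟨hvu, h u hu⟩⟩

end Cliques

section TwoUnpaired

variable [DecidableEq V] {s W : Finset V} {σ : V → V}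

lemma compl_adj_iff_of_mem_sdiff {u w : V} (hu : u ∈ s \ W) (hw : w ∈ W) :
    Gᶜ.Adj u w ↔ ¬ G.Adj u w := by
  rw [compl_adj, and_iff_right]
  rintro rfl
  exact (mem_sdiff.1 hu).2 hw

namespace IsMaxPairing

lemma isClique_compl_sdiff (hM : IsMaxPairing G s W σ) :
    Gᶜ.IsClique ((s \ W : Finset V) : Set V) :=
  fun _ hu _ hv huv => (compl_adj G _ _).2 ⟨huv, hM.not_adj hu hv⟩

variable [DecidableRel G.Adj] {x : V}

lemma card_le_card_filter_not_adj_add (hM : IsMaxPairing G s W σ) {a b : V} (ha : a ∈ s \ W)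
    (hb : b ∈ s \ W) (hab : a ≠ b) :
    #W ≤ #{w ∈ W | ¬ G.Adj a w} + #{w ∈ W | ¬ G.Adj b w} :=
  hM.isPairing.card_le_card_filter_add fun w hw => by
    by_contra! h
    exact hab (hM.eq_of_adj_of_adj_partner ha hb hw h.1 h.2)

/-- Neither `a` nor `b` is adjacent to all of the clique `W` (with `x` that would make a clique
of size `#W + 2`), and by `eq_of_isClique` their neighbourhoods in `W` are empty or one common
vertex. -/
lemma card_lt_card_filter_not_adj_add (hM : IsMaxPairing G s W σ) (hx : ∀ v ∈ s, G.Adj x v)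
    (hcl : G.CliqueFree (#W + 2)) (hW : G.IsClique (W : Set V)) (hW3 : 3 ≤ #W) {a b : V}
    (ha : a ∈ s \ W) (hb : b ∈ s \ W) (hab : a ≠ b) :
    #W < #{w ∈ W | ¬ G.Adj a w} + #{w ∈ W | ¬ G.Adj b w} := by
  have hsome : ∀ {c}, c ∈ s \ W → 0 < #{w ∈ W | ¬ G.Adj c w} := fun {c} hc => by
    refine card_pos.2 ?_
    by_contra! h
    simp only [filter_eq_empty_iff, not_not] at h
    refine (card_add_one_lt_of_isClique hcl hx (t := insert c W)
      (insert_subset (mem_sdiff.1 hc).1 hM.subset) ?_).ne ?_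
    · rw [coe_insert, isClique_insert]; exact ⟨hW, fun w hw _ => h hw⟩
    · rw [card_insert_of_notMem (mem_sdiff.1 hc).2]
  have hPa := card_filter_add_card_filter_not (s := W) (fun w => G.Adj a w)
  have hPb := card_filter_add_card_filter_not (s := W) (fun w => G.Adj b w)
  have := hsome ha
  have := hsome hb
  rcases eq_empty_or_nonempty {w ∈ W | G.Adj a w} with hPa₀ | ⟨z, hz⟩
  · rw [hPa₀, card_empty] at hPa; omega
  rcases eq_empty_or_nonempty {w ∈ W | G.Adj b w} with hPb₀ | ⟨w, hw⟩
  · rw [hPb₀, card_empty] at hPb; omega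
  rw [mem_filter] at hz hw
  have hsame : ∀ z' ∈ {w ∈ W | G.Adj a w}, ∀ w' ∈ {w ∈ W | G.Adj b w}, z' = w' := by
    intro z' hz' w' hw'
    rw [mem_filter] at hz' hw'
    by_contra hne
    exact hab (hM.eq_of_isClique hW ha hb hz'.1 hw'.1 hne hz'.2 hw'.2)
  have h1 : #{w ∈ W | G.Adj a w} ≤ 1 := card_le_one.2 fun z₁ h₁ z₂ h₂ =>
    (hsame z₁ h₁ w (mem_filter.2 hw)).trans (hsame z₂ h₂ w (mem_filter.2 hw)).symm
  have h2 : #{w ∈ W | G.Adj b w} ≤ 1 := card_le_one.2 fun w₁ h₁ w₂ h₂ =>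
    (hsame z (mem_filter.2 hz) w₁ h₁).symm.trans (hsame z (mem_filter.2 hz) w₂ h₂)
  omega

theorem card_interedges_of_card_sdiff_eq_two (hM : IsMaxPairing G s W σ)
    (hx : ∀ v ∈ s, G.Adj x v) (hcl : G.CliqueFree (#W + 2)) (hW3 : 3 ≤ #W)
    (hU : #(s \ W) = 2) : 2 * #W + 4 ≤ #(Gᶜ.interedges s s) := by
  obtain ⟨a, b, hab, hUab⟩ := card_eq_two.1 hU
  have ha : a ∈ s \ W := by simp [hUab]
  have hb : b ∈ s \ W := by simp [hUab]
  have hUU : #(Gᶜ.interedges (s \ W) (s \ W)) = 2 := by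
    rw [interedges_self_eq_offDiag _ hM.isClique_compl_sdiff, offDiag_card, hU]
  have hUW :
      #(Gᶜ.interedges (s \ W) W) = #{w ∈ W | ¬ G.Adj a w} + #{w ∈ W | ¬ G.Adj b w} := by
    rw [card_interedges_eq_sum, hUab, sum_pair hab]
    congr 1 <;>
      exact congrArg card (filter_congr fun w hw => compl_adj_iff_of_mem_sdiff (by assumption) hw)
  rw [← sdiff_union_of_subset hM.subset, card_interedges_union_self _ sdiff_disjoint, hUU, hUW]
  by_cases hW : G.IsClique (W : Set V)
  · have := hM.card_lt_card_filter_not_adj_add hx hcl hW hW3 ha hb hab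
    omega
  · obtain ⟨z, hz, w, hw, hzw, hnadj⟩ :
        ∃ z ∈ W, ∃ w ∈ W, z ≠ w ∧ ¬ G.Adj z w := by
      by_contra! h
      exact hW fun z hz w hw hzw => h z hz w hw hzw
    have hzw' : Gᶜ.Adj z w := (compl_adj G z w).2 ⟨hzw, hnadj⟩
    have hWW : 2 ≤ #(Gᶜ.interedges W W) := one_lt_card.2
      ⟨(z, w), Gᶜ.mk_mem_interedges_iff.2 ⟨hz, hw, hzw'⟩, (w, z),
        Gᶜ.mk_mem_interedges_iff.2 ⟨hw, hz, hzw'.symm⟩, by simp [hzw]⟩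
    have := hM.card_le_card_filter_not_adj_add ha hb hab
    omega

end IsMaxPairing

end TwoUnpaired

section ThreeUnpaired

variable [DecidableEq V] {s W : Finset V} {σ : V → V} {a b w : V}

namespace IsMaxPairing

variable (hM : IsMaxPairing G s W σ) (hK : Gᶜ.CliqueFree 4) (hU : #(s \ W) = 3)
include hM hK hU

lemma exists_adj_sdiff (hw : w ∈ W) : ∃ a ∈ s \ W, G.Adj a w := by
  obtain ⟨a, ha, hwa⟩ := exists_adj_of_isClique_compl hK hM.isClique_compl_sdiff hU
    (fun h => (mem_sdiff.1 h).2 hw)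
  exact ⟨a, ha, hwa.symm⟩

lemma adj_partner (hw : w ∈ W) (ha : a ∈ s \ W) (haw : G.Adj a w) : G.Adj a (σ w) := by
  obtain ⟨c, hc, hcσ⟩ := hM.exists_adj_sdiff hK hU (hM.isPairing.mem hw)
  rwa [hM.eq_of_adj_of_adj_partner ha hc hw haw hcσ]

lemma eq_of_adj_of_adj (hw : w ∈ W) (ha : a ∈ s \ W) (hb : b ∈ s \ W) (haw : G.Adj a w)
    (hbw : G.Adj b w) : a = b :=
  hM.eq_of_adj_of_adj_partner ha hb hw haw (hM.adj_partner hK hU hw hb hbw)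

/-- An edge `z w` would allow the exchange of `eq_of_adj_partner_of_adj` between `a` and the
neighbour of `w` in `s \ W`. -/
lemma compl_adj_of_adj_of_not_adj (ha : a ∈ s \ W) {z : V} (hz : z ∈ W) (hw : w ∈ W)
    (haz : G.Adj a z) (haw : ¬ G.Adj a w) : Gᶜ.Adj z w := by
  refine (compl_adj G z w).2 ⟨by rintro rfl; exact haw haz, fun hzw => haw ?_⟩
  obtain ⟨c, hc, hcw⟩ := hM.exists_adj_sdiff hK hU hw
  have hwσ : w ≠ σ z := by
    rintro rfl; exact haw (hM.adj_partner hK hU hz ha haz)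
  rwa [hM.eq_of_adj_partner_of_adj ha hc hz hw hwσ (hM.adj_partner hK hU hz ha haz) hzw
    (hM.adj_partner hK hU hw hc hcw)]

variable [DecidableRel G.Adj]

lemma two_mul_card_le_card_interedges_sdiff : 2 * #W ≤ #(Gᶜ.interedges (s \ W) W) := by
  rw [card_interedges_comm, card_interedges_eq_sum, mul_comm, ← smul_eq_mul, ← sum_const]
  refine sum_le_sum fun w hw => ?_
  obtain ⟨a, ha, haw⟩ := hM.exists_adj_sdiff hK hU hw
  have : {b ∈ s \ W | Gᶜ.Adj w b} = (s \ W).erase a := by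
    ext b
    rw [mem_filter, mem_erase, Gᶜ.adj_comm]
    constructor
    · rintro ⟨hb, hbw⟩
      exact ⟨fun e => (compl_adj_iff_of_mem_sdiff hb hw).1 hbw (e ▸ haw), hb⟩
    · rintro ⟨hba, hb⟩
      exact ⟨hb, (compl_adj_iff_of_mem_sdiff hb hw).2 fun hbw =>
        hba (hM.eq_of_adj_of_adj hK hU hw hb ha hbw haw)⟩
  rw [this, card_erase_of_mem ha, hU]

/-- A non-edge `z w` would span a blue `K₄` with the other two vertices of `s \ W`. -/
lemma isClique_filter_adj (ha : a ∈ s \ W) :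
    G.IsClique (({w ∈ W | G.Adj a w} : Finset V) : Set V) := by
  intro z hz w hw hzw
  rw [mem_coe, mem_filter] at hz hw
  by_contra hnadj
  have hwU : w ∉ (s \ W).erase a := fun h => (mem_sdiff.1 (mem_of_mem_erase h)).2 hw.1
  obtain ⟨c, hc, hzc⟩ := exists_adj_of_isClique_compl hK (t := insert w ((s \ W).erase a)) (by
    rw [coe_insert, isClique_insert]
    refine ⟨hM.isClique_compl_sdiff.subset (coe_subset.2 (erase_subset _ _)), fun b hb _ => ?_⟩
    obtain ⟨hba, hb⟩ := mem_erase.1 hb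
    exact ((compl_adj_iff_of_mem_sdiff hb hw.1).2 fun hbw =>
      hba (hM.eq_of_adj_of_adj hK hU hw.1 hb ha hbw hw.2)).symm)
    (by rw [card_insert_of_notMem hwU, card_erase_of_mem ha, hU])
    (by simp only [mem_insert, mem_erase, mem_sdiff, not_or]; exact ⟨hzw, fun h => h.2.2 hz.1⟩)
  rcases mem_insert.1 hc with rfl | hc
  · exact hnadj hzc
  · obtain ⟨hca, hc⟩ := mem_erase.1 hc
    exact hca (hM.eq_of_adj_of_adj hK hU hz.1 hc ha hzc.symm hz.2)

/-- The neighbours of `a` in `W` form a clique together with `a` and `x`. -/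
lemma card_filter_adj_add_two_le {x : V} (hx : ∀ v ∈ s, G.Adj x v)
    (hcl : G.CliqueFree (#W + 2)) (ha : a ∈ s \ W) : #{w ∈ W | G.Adj a w} + 2 ≤ #W := by
  have h := hM.isPairing
  have hSW : #{w ∈ W | G.Adj a w} < #W := by
    have : #(insert a {w ∈ W | G.Adj a w}) + 1 < #W + 2 := card_add_one_lt_of_isClique hcl hx
      (insert_subset (mem_sdiff.1 ha).1 ((filter_subset _ _).trans hM.subset)) (by
        rw [coe_insert, isClique_insert]
        exact ⟨hM.isClique_filter_adj hK hU ha, fun w hw _ => (mem_filter.1 hw).2⟩)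
    rw [card_insert_of_notMem fun h' => (mem_sdiff.1 ha).2 (mem_filter.1 h').1] at this
    omega
  obtain ⟨w, hw, hwS⟩ := exists_mem_notMem_of_card_lt_card hSW
  have hσS : σ w ∉ {w ∈ W | G.Adj a w} := fun hσ => hwS (mem_filter.2 ⟨hw,
    h.involutive hw ▸ hM.adj_partner hK hU (h.mem hw) ha (mem_filter.1 hσ).2⟩)
  have := card_sdiff_add_card_eq_card (filter_subset (fun w => G.Adj a w) W)
  have : 2 ≤ #(W \ {w ∈ W | G.Adj a w}) := one_lt_card.2
    ⟨w, mem_sdiff.2 ⟨hw, hwS⟩, σ w, mem_sdiff.2 ⟨h.mem hw, hσS⟩, (h.ne hw).symm⟩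
  omega

/-- The blue pairs between the vertices adjacent to some `a ∈ s \ W` and the other paired
vertices already give the bound. -/
lemma card_interedges_self_add {x : V} (hx : ∀ v ∈ s, G.Adj x v) (hcl : G.CliqueFree (#W + 2)) :
    4 * #W ≤ #(Gᶜ.interedges W W) + 8 := by
  rcases W.eq_empty_or_nonempty with rfl | ⟨w₀, hw₀⟩
  · simp
  have h := hM.isPairing
  obtain ⟨a, ha, haw₀⟩ := hM.exists_adj_sdiff hK hU hw₀
  set S := {w ∈ W | G.Adj a w}
  have hS : 2 ≤ #S := one_lt_card.2 ⟨w₀, mem_filter.2 ⟨hw₀, haw₀⟩, σ w₀,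
    mem_filter.2 ⟨h.mem hw₀, hM.adj_partner hK hU hw₀ ha haw₀⟩, (h.ne hw₀).symm⟩
  have hSW := hM.card_filter_adj_add_two_le hK hU hx hcl ha
  have hcross : #(Gᶜ.interedges S (W \ S)) = #S * #(W \ S) := by
    rw [interedges_eq_product, card_product]
    intro z hz w hw
    exact hM.compl_adj_of_adj_of_not_adj hK hU ha (mem_filter.1 hz).1 (mem_sdiff.1 hw).1
      (mem_filter.1 hz).2 fun haw => (mem_sdiff.1 hw).2 (mem_filter.2 ⟨(mem_sdiff.1 hw).1, haw⟩)
  have hsplit := card_interedges_union_self Gᶜ (disjoint_sdiff : Disjoint S (W \ S))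
  rw [union_sdiff_of_subset (filter_subset _ _), hcross] at hsplit
  have hWS := card_sdiff_add_card_eq_card (filter_subset (G.Adj a) W)
  nlinarith

theorem card_interedges_of_card_sdiff_eq_three {x : V} (hx : ∀ v ∈ s, G.Adj x v)
    (hcl : G.CliqueFree (#W + 2)) : 8 * #W ≤ #(Gᶜ.interedges s s) + 2 := by
  rw [← sdiff_union_of_subset hM.subset, card_interedges_union_self _ sdiff_disjoint,
    interedges_self_eq_offDiag _ hM.isClique_compl_sdiff, offDiag_card, hU]
  have := hM.two_mul_card_le_card_interedges_sdiff hK hU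
  have := hM.card_interedges_self_add hK hU hx hcl
  omega

end IsMaxPairing

end ThreeUnpaired

section DoubleCounting

variable [Fintype V] (H : SimpleGraph V) [DecidableRel H.Adj]

/-- Both sides count the triples `(x, u, v)` with `x` a common `G`-neighbour of the
`H`-adjacent vertices `u, v`. -/
lemma sum_card_interedges_neighborFinset [DecidableEq V] (G : SimpleGraph V)
    [DecidableRel G.Adj] :
    ∑ x, #(H.interedges (G.neighborFinset x) (G.neighborFinset x)) =
      ∑ u, ∑ v ∈ H.neighborFinset u, #(G.neighborFinset u ∩ G.neighborFinset v) :=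
  calc ∑ x, #(H.interedges (G.neighborFinset x) (G.neighborFinset x))
      = ∑ x, ∑ e ∈ H.interedges (G.neighborFinset x) (G.neighborFinset x), 1 := by
        simp only [card_eq_sum_ones]
    _ = ∑ e ∈ H.interedges univ univ,
          ∑ x ∈ G.neighborFinset e.1 ∩ G.neighborFinset e.2, 1 :=
        sum_comm' fun x e => by simp only [mem_interedges_iff, mem_inter, mem_neighborFinset,
          mem_univ, true_and, G.adj_comm x]; tauto
    _ = ∑ u, ∑ v ∈ H.neighborFinset u, #(G.neighborFinset u ∩ G.neighborFinset v) := by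
        rw [interedges_def, sum_filter, sum_product]
        simp only [← card_eq_sum_ones]
        refine sum_congr rfl fun u _ => ?_
        rw [neighborFinset_eq_filter (G := H), sum_filter]

lemma sum_sum_neighborFinset_add (f : V → ℕ) :
    ∑ u, ∑ v ∈ H.neighborFinset u, (f u + f v) = 2 * ∑ u, H.degree u * f u := by
  rw [two_mul]
  simp only [sum_add_distrib, sum_const, card_neighborFinset_eq_degree, smul_eq_mul]
  congr 1
  rw [sum_comm' (t' := univ) (s' := fun v => H.neighborFinset v) (fun u v => by simp [H.adj_comm])]
  simp [sum_const, card_neighborFinset_eq_degree]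

end DoubleCounting

section CommonNeighbours

variable [Fintype V] [DecidableEq V] [DecidableRel G.Adj]

/-- The vertices adjacent to neither of two non-adjacent vertices `u, v` form a clique, since
with `u, v` any non-edge among them would span an independent 4-set. -/
lemma card_inter_neighborFinset_add_card_le {k : ℕ} (hK : Gᶜ.CliqueFree 4) (hk : G.CliqueFree k)
    {u v : V} (huv : Gᶜ.Adj u v) :
    #(G.neighborFinset u ∩ G.neighborFinset v) + Fintype.card V ≤
      G.degree u + G.degree v + 1 + k := by
  set A := insert u (G.neighborFinset u)
  set B := insert v (G.neighborFinset v)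
  have hout : ∀ a ∉ A ∪ B, Gᶜ.Adj u a ∧ Gᶜ.Adj v a := fun a ha => by
    simp only [A, B, mem_union, mem_insert, mem_neighborFinset, not_or] at ha
    exact ⟨(compl_adj G u a).2 ⟨Ne.symm ha.1.1, ha.1.2⟩,
      (compl_adj G v a).2 ⟨Ne.symm ha.2.1, ha.2.2⟩⟩
  have hclique : G.IsClique (((A ∪ B)ᶜ : Finset V) : Set V) := by
    intro a ha b hb hab
    rw [mem_coe, mem_compl] at ha hb
    obtain ⟨c, hc, hbc⟩ := exists_adj_of_isClique_compl hK (t := {u, v, a}) (by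
        rw [coe_insert, coe_pair, isClique_insert, isClique_pair]
        refine ⟨fun _ => (hout a ha).2, ?_⟩
        intro c hc _
        rcases hc with rfl | hc
        exacts [huv, (Set.mem_singleton_iff.1 hc) ▸ (hout a ha).1])
      (card_eq_three.2 ⟨u, v, a, huv.ne, (hout a ha).1.ne, (hout a ha).2.ne, rfl⟩)
      (by simp only [mem_insert, mem_singleton, not_or]
          exact ⟨(hout b hb).1.ne', (hout b hb).2.ne', hab.symm⟩)
    simp only [mem_insert, mem_singleton] at hc
    rcases hc with rfl | rfl | rfl
    · exact absurd hbc.symm ((compl_adj G _ _).1 (hout b hb).1).2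
    · exact absurd hbc.symm ((compl_adj G _ _).1 (hout b hb).2).2
    · exact hbc.symm
  have hinter : G.neighborFinset u ∩ G.neighborFinset v ⊆ A ∩ B :=
    inter_subset_inter (subset_insert _ _) (subset_insert _ _)
  have := card_le_card hinter
  have := card_lt_of_isClique hk hclique
  have := card_union_add_card_inter A B
  have := card_compl_add_card (A ∪ B)
  have hA : #A = G.degree u + 1 := by
    rw [card_insert_of_notMem (notMem_neighborFinset_self _ _), card_neighborFinset_eq_degree]
  have hB : #B = G.degree v + 1 := by
    rw [card_insert_of_notMem (notMem_neighborFinset_self _ _), card_neighborFinset_eq_degree]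
  omega

lemma exists_card_interedges_add_le [Nonempty V] {c : ℕ}
    (hstar : ∀ u v, Gᶜ.Adj u v →
      #(G.neighborFinset u ∩ G.neighborFinset v) + c ≤ G.degree u + G.degree v + 1) :
    ∃ x, #(Gᶜ.interedges (G.neighborFinset x) (G.neighborFinset x)) + c * Gᶜ.degree x ≤
      Gᶜ.degree x * (2 * G.degree x + 1) := by
  by_contra! h
  have hlt := sum_lt_sum_of_nonempty univ_nonempty fun x (_ : x ∈ univ) => h x
  have hle := sum_le_sum fun u (_ : u ∈ univ) => sum_le_sum fun v hv =>
    hstar u v ((mem_neighborFinset _ _ _).1 hv)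
  have hdeg := sum_sum_neighborFinset_add Gᶜ fun v => G.degree v
  simp only [sum_add_distrib, sum_const, card_neighborFinset_eq_degree, smul_eq_mul] at hlt hle hdeg
  rw [sum_card_interedges_neighborFinset, ← mul_sum] at hlt
  have hexp : ∑ x, Gᶜ.degree x * (2 * G.degree x + 1) =
      2 * ∑ x, Gᶜ.degree x * G.degree x + ∑ x, Gᶜ.degree x := by
    rw [mul_sum, ← sum_add_distrib]; exact sum_congr rfl fun x _ => by ring
  simp only [mul_one] at hle
  rw [← sum_mul, mul_comm _ c] at hle
  omega

end CommonNeighbours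

lemma cliqueFree_of_not_containsFan {n : ℕ} (hF : ¬ ContainsFan G n) :
    G.CliqueFree (2 * n + 1) := by
  classical
  intro t ht
  obtain ⟨x, hx⟩ := card_pos.1 (by rw [ht.card_eq]; omega)
  have hcard : #(t.erase x) = 2 * n := by rw [card_erase_of_mem hx, ht.card_eq]; rfl
  obtain ⟨σ, hσ⟩ := exists_isPairing_of_isClique
    (ht.isClique.subset (coe_subset.2 (erase_subset x t))) (by rw [hcard]; exact even_two_mul n)
  exact hF (hσ.containsFan (fun w hw => ht.isClique hx (mem_of_mem_erase hw)
    (ne_of_mem_erase hw).symm) hcard.ge)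

lemma cliqueFree_four_of_not_containsK4 (h : ¬ ContainsK4 G) : G.CliqueFree 4 := by
  classical
  intro t ht
  obtain ⟨a, b, c, d, hab, hac, had, hbc, hbd, hcd, rfl⟩ := card_eq_four.1 ht.card_eq
  have := ht.isClique
  exact h ⟨a, b, c, d, this (by simp) (by simp) hab, this (by simp) (by simp) hac,
    this (by simp) (by simp) had, this (by simp) (by simp) hbc, this (by simp) (by simp) hbd,
    this (by simp) (by simp) hcd⟩

section Main

variable [Fintype V] [DecidableEq V] [DecidableRel G.Adj]

lemma compl_degree_mul_lt {n : ℕ} (hV : Fintype.card V = 6 * n) (hn : 4 ≤ n)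
    (hF : ¬ ContainsFan G n) (hK : Gᶜ.CliqueFree 4) (hcl : G.CliqueFree (2 * n)) (x : V) :
    Gᶜ.degree x * (2 * G.degree x + 1) <
      #(Gᶜ.interedges (G.neighborFinset x) (G.neighborFinset x)) + 4 * n * Gᶜ.degree x := by
  obtain ⟨W, σ, hM⟩ := exists_isMaxPairing G (G.neighborFinset x)
  have hx : ∀ v ∈ G.neighborFinset x, G.Adj x v := fun v hv => (mem_neighborFinset _ _ _).1 hv
  have hW : #W + 2 ≤ 2 * n := by
    have hlt : #W < 2 * n := lt_of_not_ge fun h =>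
      hF (hM.isPairing.containsFan (fun w hw => hx w (hM.subset hw)) h)
    obtain ⟨k, hk⟩ := hM.isPairing.even_card
    omega
  have hU : #(G.neighborFinset x \ W) < 4 := card_lt_of_isClique hK hM.isClique_compl_sdiff
  have hdeg : #(G.neighborFinset x \ W) + #W = G.degree x := by
    rw [card_sdiff_add_card_eq_card hM.subset, card_neighborFinset_eq_degree]
  have hcompl : Gᶜ.degree x + G.degree x + 1 = 6 * n := by
    have := G.degree_lt_card_verts x
    rw [degree_compl]; omega
  obtain ⟨k, hk⟩ := hM.isPairing.even_card
  rcases (by omega : G.degree x < 2 * n ∨ (#W + 2 = 2 * n ∧ #(G.neighborFinset x \ W) = 2) ∨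
      (#W + 2 = 2 * n ∧ #(G.neighborFinset x \ W) = 3)) with hd | ⟨hW2, hU2⟩ | ⟨hW2, hU3⟩
  · nlinarith
  · have := hM.card_interedges_of_card_sdiff_eq_two hx (hW2 ▸ hcl) (by omega) hU2
    nlinarith
  · have := hM.card_interedges_of_card_sdiff_eq_three hK hU3 hx (hW2 ▸ hcl)
    nlinarith

theorem not_cliqueFree_two_mul {n : ℕ} (hV : Fintype.card V = 6 * n) (hn : 4 ≤ n)
    (hF : ¬ ContainsFan G n) (hK : Gᶜ.CliqueFree 4) : ¬ G.CliqueFree (2 * n) := fun hcl => by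
  have : Nonempty V := Fintype.card_pos_iff.1 (by omega)
  obtain ⟨x, hx⟩ := exists_card_interedges_add_le (G := G) (c := 4 * n) fun u v huv => by
    have := card_inter_neighborFinset_add_card_le hK hcl huv
    omega
  exact (compl_degree_mul_lt hV hn hF hK hcl x).not_ge hx

end Main

/-- In an `(Fₙ, K₄)`-free coloring of `K_{6n}` (`n ≥ 4`), the clique number of the
red subgraph is exactly `2n`. -/
theorem red_clique_number (n : ℕ) (hn : 4 ≤ n)
    (R : SimpleGraph (Fin (6 * n)))
    (hfree : ¬ ContainsFan R n ∧ ¬ ContainsK4 Rᶜ) :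
    R.cliqueNum = 2 * n := by
  classical
  obtain ⟨hF, hK⟩ := hfree
  obtain ⟨s, hs⟩ := R.exists_isNClique_cliqueNum
  obtain ⟨t, ht⟩ : ∃ t, R.IsNClique (2 * n) t := by
    by_contra! h
    exact not_cliqueFree_two_mul (Fintype.card_fin _) hn hF
      (cliqueFree_four_of_not_containsK4 hK) h
  refine le_antisymm ?_ (ht.card_eq ▸ ht.isClique.card_le_cliqueNum)
  exact Nat.lt_succ_iff.1 (hs.card_eq ▸ card_lt_of_isClique (cliqueFree_of_not_containsFan hF)
    hs.isClique)
end

section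
/- Let n ≥ 4 be an integer, let K_{6n} be given a red/blue edge-coloring that is (F_n, K_4)-free, and let x, y, z be three vertices whose three mutual edges are all blue (a blue triangle). Then the set N^B(x) ∩ N^B(y) of common blue neighbors of x and y has size at least 2n − 5 and all edges inside it are red; moreover, all edges between z and N^B(x) ∩ N^B(y) are red, so that (N^B(x) ∩ N^B(y)) ∪ {z} is a red clique of order at least 2n − 4. -/
open SimpleGraph

/-!
Since the blue graph has no `K₄`, any four vertices span a red edge, so greedily any
`2k + 2` vertices contain `k` disjoint red edges. A red neighbourhood of size `2n + 2` would
thus carry a red `Fₙ` centred at its vertex, so red degrees are at most `2n + 1` and blue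
degrees at least `4n - 2`; two blue neighbourhoods in `K_{6n}` then share at least `2n - 4`
vertices. A blue edge among the common blue neighbours of `x` and `y` would close a blue
`K₄` with the blue edge `xy`, and `z` is itself one of these common neighbours.
-/

open Finset

namespace SimpleGraph

variable {V : Type*} {G : SimpleGraph V}

lemma containsK4_of_not_cliqueFree (h : ¬ G.CliqueFree 4) : ContainsK4 G := by
  obtain ⟨f⟩ := (not_cliqueFree_iff_top_isContained 4).1 h
  have adj : ∀ i j : Fin 4, i ≠ j → G.Adj (f i) (f j) := fun i j hij => f.toHom.map_adj hij
  exact ⟨f 0, f 1, f 2, f 3, adj _ _ (by decide), adj _ _ (by decide), adj _ _ (by decide),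
    adj _ _ (by decide), adj _ _ (by decide), adj _ _ (by decide)⟩

lemma exists_adj_of_not_containsK4_compl (hK4 : ¬ ContainsK4 Gᶜ) {s : Finset V}
    (hs : 4 ≤ #s) : ∃ u ∈ s, ∃ w ∈ s, G.Adj u w := by
  by_contra! hind
  obtain ⟨t, hts, ht⟩ := exists_subset_card_eq hs
  have hclique : Gᶜ.IsClique (t : Set V) := fun u hu w hw huw =>
    (compl_adj G u w).2 ⟨huw, hind u (hts hu) w (hts hw)⟩
  exact hK4 (containsK4_of_not_cliqueFree ((isNClique_iff _).2 ⟨hclique, ht⟩).not_cliqueFree)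

lemma exists_matching_of_not_containsK4_compl [DecidableEq V] (hK4 : ¬ ContainsK4 Gᶜ)
    (k : ℕ) {s : Finset V} (hs : 2 * k + 2 ≤ #s) :
    ∃ g : Fin k × Bool → V, Function.Injective g ∧ (∀ p, g p ∈ s) ∧
      ∀ i, G.Adj (g (i, true)) (g (i, false)) := by
  induction k generalizing s with
  | zero => exact ⟨fun p => p.1.elim0, fun p => p.1.elim0, fun p => p.1.elim0, fun i => i.elim0⟩
  | succ k ih =>
    obtain ⟨u, hu, w, hw, huw⟩ := exists_adj_of_not_containsK4_compl hK4 (by omega : 4 ≤ #s)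
    have hcard : 2 * k + 2 ≤ #((s.erase u).erase w) := by
      rw [card_erase_of_mem (mem_erase.2 ⟨huw.ne.symm, hw⟩), card_erase_of_mem hu]
      omega
    obtain ⟨g, hg, hgs, hgadj⟩ := ih hcard
    have hgu : ∀ p, g p ≠ u := fun p => (mem_erase.1 (mem_of_mem_erase (hgs p))).1
    have hgw : ∀ p, g p ≠ w := fun p => (mem_erase.1 (hgs p)).1
    refine ⟨fun p => Fin.cases (if p.2 then u else w) (fun i => g (i, p.2)) p.1, ?_, ?_, ?_⟩
    · rintro ⟨i, a⟩ ⟨j, b⟩ hij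
      induction i using Fin.cases <;> induction j using Fin.cases <;>
        cases a <;> cases b <;> simp_all [huw.ne, huw.ne.symm, hg.eq_iff, eq_comm]
    · rintro ⟨i, a⟩
      induction i using Fin.cases
      · cases a <;> simp [hu, hw]
      · exact mem_of_mem_erase (mem_of_mem_erase (hgs _))
    · intro i
      induction i using Fin.cases
      · exact huw
      · exact hgadj _

lemma containsFan_of_matching_of_adj {n : ℕ} (v : V) (g : Fin n × Bool → V)
    (hg : Function.Injective g) (hvg : ∀ p, G.Adj v (g p))
    (hgadj : ∀ i, G.Adj (g (i, true)) (g (i, false))) : ContainsFan G n := by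
  refine ⟨⟨fun o => o.elim v g, ?_⟩, ?_⟩
  · rintro (_ | p) (_ | q) hpq
    · rfl
    · exact absurd hpq (hvg q).ne
    · exact absurd hpq.symm (hvg p).ne
    · exact congrArg some (hg hpq)
  · rintro (_ | p) (_ | q) ⟨hne, hpq⟩
    · exact absurd rfl hne
    · exact hvg q
    · exact (hvg p).symm
    · obtain ⟨i, a, b, rfl, rfl⟩ : ∃ i a b, p = (i, a) ∧ q = (i, b) := by simpa using hpq
      cases a <;> cases b
      all_goals first | exact absurd rfl hne | exact hgadj i | exact (hgadj i).symm

lemma degree_le_of_not_containsFan [Fintype V] [DecidableEq V] [DecidableRel G.Adj] {n : ℕ}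
    (hFan : ¬ ContainsFan G n) (hK4 : ¬ ContainsK4 Gᶜ) (v : V) : G.degree v ≤ 2 * n + 1 := by
  by_contra! hdeg
  obtain ⟨g, hg, hgN, hgadj⟩ := exists_matching_of_not_containsK4_compl hK4 n
    (s := G.neighborFinset v) (by rw [card_neighborFinset_eq_degree]; omega)
  exact hFan (containsFan_of_matching_of_adj v g hg
    (fun p => (G.mem_neighborFinset v _).1 (hgN p)) hgadj)

lemma ncard_compl_neighborSet [Fintype V] [DecidableRel G.Adj] (v : V) :
    (Gᶜ.neighborSet v).ncard = Fintype.card V - 1 - G.degree v := by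
  classical
  rw [← degree_compl, ← card_neighborFinset_eq_degree, ← Set.ncard_coe_finset, coe_neighborFinset]

lemma le_ncard_inter_compl_neighborSet [Fintype V] [DecidableRel G.Adj] {d : ℕ}
    (hd : ∀ v, G.degree v ≤ d) (x y : V) :
    Fintype.card V - 2 - 2 * d ≤ (Gᶜ.neighborSet x ∩ Gᶜ.neighborSet y).ncard := by
  have hunion : (Gᶜ.neighborSet x ∪ Gᶜ.neighborSet y).ncard ≤ Fintype.card V := by
    rw [← Nat.card_eq_fintype_card]; exact Set.ncard_le_card _
  have hincl := Set.ncard_inter_add_ncard_union (Gᶜ.neighborSet x) (Gᶜ.neighborSet y)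
  rw [ncard_compl_neighborSet, ncard_compl_neighborSet] at hincl
  have hx := hd x
  have hy := hd y
  omega

lemma isClique_inter_compl_neighborSet (hK4 : ¬ ContainsK4 Gᶜ) {x y : V} (hxy : Gᶜ.Adj x y) :
    G.IsClique (Gᶜ.neighborSet x ∩ Gᶜ.neighborSet y) := by
  intro u hu w hw huw
  by_contra hblue
  exact hK4 ⟨x, y, u, w, hxy, hu.1, hw.1, hu.2, hw.2, (compl_adj G u w).2 ⟨huw, hblue⟩⟩

end SimpleGraph

theorem blue_triangle_red_cliques_general (n : ℕ)
    (R : SimpleGraph (Fin (6 * n)))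
    (hfree : ¬ ContainsFan R n ∧ ¬ ContainsK4 Rᶜ)
    (x y z : Fin (6 * n))
    (hxy : Rᶜ.Adj x y) (hxz : Rᶜ.Adj x z) (hyz : Rᶜ.Adj y z) :
    2 * n - 5 ≤ (Rᶜ.neighborSet x ∩ Rᶜ.neighborSet y).ncard ∧
    R.IsClique (Rᶜ.neighborSet x ∩ Rᶜ.neighborSet y) ∧
    (∀ u ∈ Rᶜ.neighborSet x ∩ Rᶜ.neighborSet y, u ≠ z → R.Adj z u) ∧
    R.IsClique (insert z (Rᶜ.neighborSet x ∩ Rᶜ.neighborSet y)) ∧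
    2 * n - 4 ≤ (insert z (Rᶜ.neighborSet x ∩ Rᶜ.neighborSet y)).ncard := by
  classical
  obtain ⟨hFan, hK4⟩ := hfree
  have hz : z ∈ Rᶜ.neighborSet x ∩ Rᶜ.neighborSet y := ⟨hxz, hyz⟩
  have hclique := isClique_inter_compl_neighborSet hK4 hxy
  have hcard : 2 * n - 4 ≤ (Rᶜ.neighborSet x ∩ Rᶜ.neighborSet y).ncard := by
    have h := le_ncard_inter_compl_neighborSet (degree_le_of_not_containsFan hFan hK4) x y
    rw [Fintype.card_fin] at h
    omega
  rw [Set.insert_eq_of_mem hz]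
  exact ⟨by omega, hclique, fun u hu huz => hclique hz hu huz.symm, hclique, hcard⟩

/-- In an `(Fₙ, K₄)`-free coloring of `K_{6n}` (`n ≥ 4`), for any blue triangle
`x, y, z`: the set `N^B(x) ∩ N^B(y)` of common blue neighbors of `x` and `y` has
size at least `2n - 5`, all edges inside it are red, all edges between `z` and it
are red, and hence `(N^B(x) ∩ N^B(y)) ∪ {z}` is a red clique of order at least
`2n - 4`. -/
theorem blue_triangle_red_cliques (n : ℕ) (hn : 4 ≤ n)
    (R : SimpleGraph (Fin (6 * n)))
    (hfree : ¬ ContainsFan R n ∧ ¬ ContainsK4 Rᶜ)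
    (x y z : Fin (6 * n))
    (hxy : Rᶜ.Adj x y) (hxz : Rᶜ.Adj x z) (hyz : Rᶜ.Adj y z) :
    2 * n - 5 ≤ (Rᶜ.neighborSet x ∩ Rᶜ.neighborSet y).ncard ∧
    R.IsClique (Rᶜ.neighborSet x ∩ Rᶜ.neighborSet y) ∧
    (∀ u ∈ Rᶜ.neighborSet x ∩ Rᶜ.neighborSet y, u ≠ z → R.Adj z u) ∧
    R.IsClique (insert z (Rᶜ.neighborSet x ∩ Rᶜ.neighborSet y)) ∧
    2 * n - 4 ≤ (insert z (Rᶜ.neighborSet x ∩ Rᶜ.neighborSet y)).ncard :=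
  blue_triangle_red_cliques_general n R hfree x y z hxy hxz hyz
end
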